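/- The Grassmannian constant μ_{5,2}(ℂ) equals 1/√2: every set of 5 unit vectors in ℂ^2 has coherence max_{j ≠ l} |⟨φ_j, φ_l⟩| ≥ 1/√2, and there exists a set of 5 unit vectors in ℂ^2 whose coherence equals exactly 1/√2. -/

import Mathlib

/-!
The map `x ↦ (2 Re (x̄₀ x₁), 2 Im (x̄₀ x₁), |x₀|² - |x₁|²)` sends unit vectors of `ℂ²` to the unit
sphere of `ℝ³` (the Bloch sphere) and satisfies `⟪b x, b y⟫ = 2 |⟪x, y⟫|² - 1`. Coherence below
`1/√2` therefore means pairwise negative inner products of the Bloch vectors, and at most `n + 1`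
vectors of `ℝⁿ` have pairwise negative inner products: projecting the others onto the orthogonal
complement of one of them keeps their inner products negative and lowers the dimension. The bound
is attained by five of the six vertices of the octahedron `±e₁, ±e₂, ±e₃`, lifted back to `ℂ²`.
-/

open Module RealInnerProductSpace ComplexConjugate

section ObtuseFamily

variable {E : Type*} [NormedAddCommGroup E] [InnerProductSpace ℝ E]

theorem inner_starProjection_orthogonal_span_singleton (w x y : E) :
    ⟪(ℝ ∙ w)ᗮ.starProjection x, (ℝ ∙ w)ᗮ.starProjection y⟫ =
      ⟪x, y⟫ - ⟪w, x⟫ * ⟪w, y⟫ / ‖w‖ ^ 2 := by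
  rcases eq_or_ne w 0 with rfl | hw
  · simp [Submodule.starProjection_top]
  simp only [Submodule.starProjection_orthogonal_val, Submodule.starProjection_singleton,
    inner_sub_left, inner_sub_right, real_inner_smul_left, real_inner_smul_right,
    real_inner_self_eq_norm_sq, real_inner_comm w, RCLike.ofReal_real_eq_id, id]
  field_simp
  ring

theorem pairwise_inner_starProjection_neg_of_pairwise_inner_neg {ι : Type*} {v : ι → E}
    (hv : Pairwise fun i j => ⟪v i, v j⟫ < 0) (i₀ : ι) :
    Pairwise fun i j : {i // i ≠ i₀} =>
      ⟪(ℝ ∙ v i₀)ᗮ.starProjection (v i), (ℝ ∙ v i₀)ᗮ.starProjection (v j)⟫ < 0 := by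
  intro i j hij
  rw [inner_starProjection_orthogonal_span_singleton]
  have hw : v i₀ ≠ 0 := fun h => by simpa [h] using hv i.2.symm
  have : 0 < ⟪v i₀, v i⟫ * ⟪v i₀, v j⟫ / ‖v i₀‖ ^ 2 :=
    div_pos (mul_pos_of_neg_of_neg (hv i.2.symm) (hv j.2.symm)) (by positivity)
  linarith [hv (Subtype.coe_ne_coe.mpr hij)]

theorem card_le_finrank_add_one_of_pairwise_inner_neg [FiniteDimensional ℝ E] {ι : Type*}
    [Fintype ι] {v : ι → E} (hv : Pairwise fun i j => ⟪v i, v j⟫ < 0) :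
    Fintype.card ι ≤ finrank ℝ E + 1 := by
  induction hn : finrank ℝ E using Nat.strong_induction_on generalizing E ι with
  | _ n ih =>
    classical
    rcases subsingleton_or_nontrivial ι with hι | hι
    · have := Fintype.card_le_one_iff_subsingleton.mpr hι
      omega
    obtain ⟨i₀⟩ := hι.to_nonempty
    obtain ⟨j, hj⟩ := exists_ne i₀
    have hw : v i₀ ≠ 0 := fun h => by simpa [h] using hv hj.symm
    set K := (ℝ ∙ v i₀)ᗮ
    have hK : finrank ℝ K + 1 = n := by
      rw [← hn, ← (ℝ ∙ v i₀).finrank_add_finrank_orthogonal, finrank_span_singleton hw,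
        add_comm]
    have hcard := ih _ (by omega) (v := fun i : {i // i ≠ i₀} => K.orthogonalProjectionOnto (v i))
      (fun i j hij => by
        simpa only [Submodule.coe_inner, ← Submodule.starProjection_apply]
          using pairwise_inner_starProjection_neg_of_pairwise_inner_neg hv i₀ hij) rfl
    rw [Fintype.card_subtype_compl, Fintype.card_subtype_eq] at hcard
    omega

end ObtuseFamily

noncomputable def blochVector (x : EuclideanSpace ℂ (Fin 2)) : EuclideanSpace ℝ (Fin 3) :=
  !₂[2 * (conj (x 0) * x 1).re, 2 * (conj (x 0) * x 1).im, ‖x 0‖ ^ 2 - ‖x 1‖ ^ 2]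

theorem inner_blochVector (x y : EuclideanSpace ℂ (Fin 2)) :
    ⟪blochVector x, blochVector y⟫ = 2 * ‖inner ℂ x y‖ ^ 2 - ‖x‖ ^ 2 * ‖y‖ ^ 2 := by
  simp only [blochVector, EuclideanSpace.norm_sq_eq, PiLp.inner_apply, RCLike.inner_apply,
    Fin.sum_univ_two, Fin.sum_univ_three, Matrix.cons_val_zero, Matrix.cons_val_one,
    Matrix.cons_val, Real.ringHom_apply, Complex.sq_norm, Complex.normSq_apply, Complex.add_re,
    Complex.add_im, Complex.mul_re, Complex.mul_im, Complex.conj_re, Complex.conj_im]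
  ring

theorem card_le_four_of_pairwise_norm_inner_lt {ι : Type*} [Fintype ι]
    {φ : ι → EuclideanSpace ℂ (Fin 2)} (hφ : ∀ i, ‖φ i‖ = 1)
    (h : Pairwise fun i j => ‖inner ℂ (φ i) (φ j)‖ < 1 / √2) :
    Fintype.card ι ≤ 4 := by
  refine (card_le_finrank_add_one_of_pairwise_inner_neg (v := blochVector ∘ φ)
    fun i j hij => ?_).trans_eq (by simp)
  have hsq : ‖inner ℂ (φ i) (φ j)‖ ^ 2 < 2⁻¹ := by
    rw [← Real.lt_sqrt (norm_nonneg _), Real.sqrt_inv, ← one_div]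
    exact h hij
  simp only [Function.comp_apply, inner_blochVector, hφ]
  linarith

noncomputable def octahedralFrame : Fin 5 → EuclideanSpace ℂ (Fin 2) :=
  ![!₂[1, 0], !₂[0, 1], (√2 : ℂ)⁻¹ • !₂[1, 1], (√2 : ℂ)⁻¹ • !₂[1, -1],
    (√2 : ℂ)⁻¹ • !₂[1, Complex.I]]

theorem norm_octahedralFrame (j : Fin 5) : ‖octahedralFrame j‖ = 1 := by
  rw [EuclideanSpace.norm_eq, Real.sqrt_eq_one, Fin.sum_univ_two]
  fin_cases j <;> simp [octahedralFrame] <;> norm_num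

theorem norm_inner_octahedralFrame_sq_le {j l : Fin 5} (hjl : j ≠ l) :
    ‖inner ℂ (octahedralFrame j) (octahedralFrame l)‖ ^ 2 ≤ 2⁻¹ := by
  fin_cases j <;> fin_cases l <;>
    simp [octahedralFrame, PiLp.inner_apply, Fin.sum_univ_two, mul_pow, inv_pow,
      Complex.sq_norm, Complex.normSq_apply] at hjl ⊢ <;> norm_num

theorem norm_inner_octahedralFrame_zero_two_sq :
    ‖inner ℂ (octahedralFrame 0) (octahedralFrame 2)‖ ^ 2 = 2⁻¹ := by
  simp [octahedralFrame, PiLp.inner_apply, Fin.sum_univ_two, inv_pow]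

/-- The Grassmannian constant `μ_{5,2}(ℂ)` equals `1/√2`: every set
of `5` unit vectors in `ℂ²` has coherence at least `1/√2`, and there exists a set of
`5` unit vectors in `ℂ²` whose coherence equals exactly `1/√2`. -/
theorem grassmannian_const_five_two :
    (∀ φ : Fin 5 → EuclideanSpace ℂ (Fin 2), (∀ j, ‖φ j‖ = 1) →
      ∃ j l, j ≠ l ∧ 1 / Real.sqrt 2 ≤ ‖(inner ℂ (φ j) (φ l) : ℂ)‖) ∧
    ∃ φ : Fin 5 → EuclideanSpace ℂ (Fin 2), (∀ j, ‖φ j‖ = 1) ∧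
      IsGreatest {r : ℝ | ∃ j l, j ≠ l ∧ ‖(inner ℂ (φ j) (φ l) : ℂ)‖ = r}
        (1 / Real.sqrt 2) := by
  refine ⟨fun φ hφ => ?_, octahedralFrame, norm_octahedralFrame, ?_⟩
  · by_contra! h
    simpa using card_le_four_of_pairwise_norm_inner_lt hφ h
  rw [one_div, ← Real.sqrt_inv]
  refine ⟨⟨0, 2, by decide, ?_⟩, ?_⟩
  · rw [← norm_inner_octahedralFrame_zero_two_sq, Real.sqrt_sq (norm_nonneg _)]
  · rintro _ ⟨j, l, hjl, rfl⟩
    exact Real.le_sqrt_of_sq_le (norm_inner_octahedralFrame_sq_le hjl)
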